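/- Fix an integer r ≥ 1. There is a constant C > 0 such that for all sufficiently large N the following holds: set y = 1/(4√N); then for every real x with y ≤ |x| ≤ 1/2, writing τ = x + iy and q = e^{2πiτ}, one has |S̃_r(q)| ≤ C·N^{r/2 + 1/4}. -/

import Mathlib

/-!
For `‖q‖ < 1` the `n`-th term of `S̃_r(q)` is at most `‖q‖^{n²} / (1 - ‖q‖)^r`: one factor
`1 - q^n` pairs with `1 + q^n` into `1 - q^{2n}`, and `‖1 - q^m‖ ≥ 1 - ‖q‖` for `m ≥ 1`.
With `‖q‖ = e^{-2πy}` we have `1 / (1 - ‖q‖) ≤ 1 + 1/(2πy)`, while the theta sum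
`Σ_{n ≥ 1} e^{-2πy n²}` is dominated by the Gaussian integral `∫_0^∞ e^{-2πy t²} dt = 1/(2√(2y))`.
Hence `‖S̃_r(q)‖ ≪ y^{-r-1/2}`, which for `y = 1/(4√N)` is `≍ N^{r/2 + 1/4}`.
-/

open scoped BigOperators
open Filter MeasureTheory

/-- An overpartition of `n`: a partition of `n` in which the first occurrence of
each part size may be overlined.  We encode it as a finite set of (distinct)
overlined parts together with a multiset of non-overlined parts, all positive,
with total sum `n`. -/
structure Overpartition (n : ℕ) where
  overlined : Finset ℕ
  nonoverlined : Multiset ℕ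
  overlined_pos : ∀ i ∈ overlined, 0 < i
  nonoverlined_pos : ∀ i ∈ nonoverlined, 0 < i
  total : (overlined.sum id) + nonoverlined.sum = n

namespace Overpartition

/-- The multiset of all parts of an overpartition. -/
def parts {n : ℕ} (p : Overpartition n) : Multiset ℕ := p.overlined.val + p.nonoverlined

/-- Dyson's rank of an overpartition: largest part minus number of parts. -/
def rank {n : ℕ} (p : Overpartition n) : ℤ :=
  (p.parts.sup : ℤ) - (Multiset.card p.parts : ℤ)

end Overpartition

/-- The crank of a partition (given as a multiset of positive parts):
the largest part if there are no 1's, and otherwise `μ(λ) - o(λ)` where `o(λ)`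
is the number of 1's and `μ(λ)` is the number of parts larger than `o(λ)`. -/
def multisetCrank (s : Multiset ℕ) : ℤ :=
  if s.count 1 = 0 then (s.sup : ℤ)
  else ((s.filter (fun part => s.count 1 < part)).card : ℤ) - (s.count 1 : ℤ)

/-- The first residual crank of an overpartition: the crank of the subpartition
consisting of the non-overlined parts. -/
def Overpartition.crank {n : ℕ} (p : Overpartition n) : ℤ := multisetCrank p.nonoverlined

/-- `Mbar m n` is the number of overpartitions of `n` with first residual crank `m`. -/
noncomputable def Mbar (m : ℤ) (n : ℕ) : ℕ :=
  Nat.card {p : Overpartition n // p.crank = m}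

/-- `Nbar m n` is the number of overpartitions of `n` with Dyson rank `m`. -/
noncomputable def Nbar (m : ℤ) (n : ℕ) : ℕ :=
  Nat.card {p : Overpartition n // p.rank = m}

/-- The `r`-th positive crank moment `M̄_r^+(N) = Σ_{m ≥ 1} m^r M̄(m,N)`. -/
noncomputable def Mplus (r N : ℕ) : ℝ :=
  ∑' m : ℕ, ((m : ℝ) + 1) ^ r * (Mbar ((m : ℤ) + 1) N : ℝ)

/-- The `r`-th positive rank moment `N̄_r^+(N) = Σ_{m ≥ 1} m^r N̄(m,N)`. -/
noncomputable def Nplus (r N : ℕ) : ℝ :=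
  ∑' m : ℕ, ((m : ℝ) + 1) ^ r * (Nbar ((m : ℤ) + 1) N : ℝ)

/-- Positive symmetrized crank moment `μ̄_r^+(n) = Σ_{m ≥ 1} C(m + ⌊(r-1)/2⌋, r) M̄(m,n)`. -/
noncomputable def mubar (r n : ℕ) : ℝ :=
  ∑' m : ℕ, (Nat.choose (m + 1 + (r - 1) / 2) r : ℝ) * (Mbar ((m : ℤ) + 1) n : ℝ)

/-- Positive symmetrized rank moment `η̄_r^+(n) = Σ_{m ≥ 1} C(m + ⌊(r-1)/2⌋, r) N̄(m,n)`. -/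
noncomputable def etabar (r n : ℕ) : ℝ :=
  ∑' m : ℕ, (Nat.choose (m + 1 + (r - 1) / 2) r : ℝ) * (Nbar ((m : ℤ) + 1) n : ℝ)

/-- The Dirichlet eta function at positive integers:
`η(1) = log 2` and `η(r) = (1 - 2^{1-r}) ζ(r)` for `r ≥ 2`. -/
noncomputable def dirichletEtaNat (r : ℕ) : ℝ :=
  if r = 1 then Real.log 2 else (1 - 2 ^ (1 - (r : ℝ))) * (riemannZeta r).re

/-- The infinite Pochhammer symbol `(a; q)_∞ = Π_{j ≥ 0} (1 - a q^j)`. -/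
noncomputable def poch (a q : ℂ) : ℂ := ∏' j : ℕ, (1 - a * q ^ j)

/-- The (integral) exponent `n²/2 + (r/2 + ρ_C(r)) n`, where `ρ_C(r) = 0` for odd `r`
and `1/2` for even `r`. -/
def eC (r n : ℕ) : ℕ := (n * n + r * n + (if r % 2 = 0 then n else 0)) / 2

/-- The (integral) exponent `n² + (r/2 + ρ_R(r)) n`, where `ρ_R(r) = 1/2` for odd `r`
and `1` for even `r`. -/
def eR (r n : ℕ) : ℕ := (2 * n * n + r * n + (if r % 2 = 1 then n else 2 * n)) / 2

/-- `S_r(q) = Σ_{n ≥ 1} (-1)^{n+1} q^{n²/2 + (r/2 + ρ_C(r)) n} / (1 - q^n)^r`. -/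
noncomputable def Sr (r : ℕ) (q : ℂ) : ℂ :=
  ∑' n : ℕ, (-1 : ℂ) ^ n * q ^ eC r (n + 1) / (1 - q ^ (n + 1)) ^ r

/-- `S̃_r(q) = Σ_{n ≥ 1} (-1)^{n+1} q^{n² + (r/2 + ρ_R(r)) n} / ((1 - q^n)^r (1 + q^n))`. -/
noncomputable def Str (r : ℕ) (q : ℂ) : ℂ :=
  ∑' n : ℕ, (-1 : ℂ) ^ n * q ^ eR r (n + 1) / ((1 - q ^ (n + 1)) ^ r * (1 + q ^ (n + 1)))

/-- `SC_r(q) = ((-q;q)_∞/(q;q)_∞) S_r(q)`, the generating function of the positive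
symmetrized crank moments. -/
noncomputable def SCr (r : ℕ) (q : ℂ) : ℂ := (poch (-q) q / poch q q) * Sr r q

/-- `SR_r(q) = 2 ((-q;q)_∞/(q;q)_∞) S̃_r(q)`, the generating function of the positive
symmetrized rank moments. -/
noncomputable def SRr (r : ℕ) (q : ℂ) : ℂ := 2 * (poch (-q) q / poch q q) * Str r q

/-- `c_r = ζ(r) (1 - 2^{1-r})`. -/
noncomputable def cconst (r : ℕ) : ℂ := riemannZeta r * (1 - 2 ^ (1 - (r : ℂ)))

/-- `d_r = -(ζ(r-2)(1-2^{3-r})/2 + ρ_C(r) ζ(r-1)(1-2^{1-r}))`. -/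
noncomputable def dconst (r : ℕ) : ℂ :=
  -(riemannZeta ((r : ℂ) - 2) * (1 - 2 ^ (3 - (r : ℂ))) / 2 +
    (if r % 2 = 0 then (1 : ℂ) / 2 else 0) * riemannZeta ((r : ℂ) - 1) * (1 - 2 ^ (1 - (r : ℂ))))

/-- `d'_r = -(ζ(r-2)(1-2^{3-r}) + (ρ_R(r)/2) ζ(r-1)(1-2^{1-r}))`. -/
noncomputable def dconst' (r : ℕ) : ℂ :=
  -(riemannZeta ((r : ℂ) - 2) * (1 - 2 ^ (3 - (r : ℂ))) +
    (if r % 2 = 1 then (1 : ℂ) / 4 else (1 : ℂ) / 2) * riemannZeta ((r : ℂ) - 1) *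
      (1 - 2 ^ (1 - (r : ℂ))))

/-- The modified Bessel function of the first kind,
`I_s(x) = Σ_{k ≥ 0} (x/2)^{2k+s} / (k! Γ(k+s+1))`. -/
noncomputable def besselI (s x : ℝ) : ℝ :=
  ∑' k : ℕ, (x / 2) ^ (2 * (k : ℝ) + s) / ((k.factorial : ℝ) * Real.Gamma ((k : ℝ) + s + 1))

/-- The point `τ = x + i y` in the upper half plane. -/
noncomputable def mkTau (x y : ℝ) : ℂ := (x : ℂ) + (y : ℂ) * Complex.I

open Real

theorem tsum_exp_neg_mul_succ_sq_le {a : ℝ} (ha : 0 < a) :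
    ∑' n : ℕ, exp (-a * ((n : ℝ) + 1) ^ 2) ≤ √(π / a) / 2 := by
  have hanti : AntitoneOn (fun t : ℝ => exp (-a * t ^ 2)) (Set.Ici 0) := fun s hs t ht hst => by
    have := pow_le_pow_left₀ (Set.mem_Ici.mp hs) hst 2
    simp only [exp_le_exp]
    nlinarith
  refine Real.tsum_le_of_sum_range_le (fun _ => (exp_pos _).le) fun N => ?_
  calc ∑ i ∈ Finset.range N, exp (-a * ((i : ℝ) + 1) ^ 2)
      ≤ ∫ t in (0 : ℝ)..0 + N, exp (-a * t ^ 2) := by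
        simpa using (hanti.mono Set.Icc_subset_Ici_self).sum_le_integral (x₀ := 0) (a := N)
    _ ≤ ∫ t in Set.Ioi (0 : ℝ), exp (-a * t ^ 2) := by
        rw [zero_add, intervalIntegral.integral_of_le N.cast_nonneg]
        exact setIntegral_mono_set (integrable_exp_neg_mul_sq ha).integrableOn
          (Eventually.of_forall fun _ => (exp_pos _).le) Set.Ioc_subset_Ioi_self.eventuallyLE
    _ = √(π / a) / 2 := integral_gaussian_Ioi a

theorem sq_le_eR (r n : ℕ) : n ^ 2 ≤ eR r n := by
  unfold eR
  split_ifs <;> apply Nat.le_div_iff_mul_le two_pos |>.mpr <;> nlinarith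

theorem one_sub_norm_le_norm_one_sub_pow {q : ℂ} (hq : ‖q‖ ≤ 1) {n : ℕ} (hn : n ≠ 0) :
    1 - ‖q‖ ≤ ‖1 - q ^ n‖ := by
  calc 1 - ‖q‖ ≤ 1 - ‖q‖ ^ n := by linarith [pow_le_of_le_one (norm_nonneg q) hq hn]
    _ = ‖(1 : ℂ)‖ - ‖q ^ n‖ := by rw [norm_one, norm_pow]
    _ ≤ ‖1 - q ^ n‖ := norm_sub_norm_le _ _

theorem one_sub_norm_pow_le_norm_Str_denom {q : ℂ} (hq : ‖q‖ ≤ 1) {r n : ℕ} (hr : 1 ≤ r)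
    (hn : n ≠ 0) : (1 - ‖q‖) ^ r ≤ ‖(1 - q ^ n) ^ r * (1 + q ^ n)‖ := by
  obtain ⟨k, rfl⟩ := Nat.exists_eq_add_of_le' hr
  have hpair : (1 - q ^ n) ^ (k + 1) * (1 + q ^ n) = (1 - q ^ n) ^ k * (1 - q ^ (2 * n)) := by
    ring
  have h0 : 0 ≤ 1 - ‖q‖ := sub_nonneg.mpr hq
  rw [hpair, norm_mul, norm_pow, pow_succ]
  exact mul_le_mul (pow_le_pow_left₀ h0 (one_sub_norm_le_norm_one_sub_pow hq hn) k)
    (one_sub_norm_le_norm_one_sub_pow hq (by omega)) h0 (by positivity)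

theorem norm_Str_le {q : ℂ} (hq : ‖q‖ < 1) {r : ℕ} (hr : 1 ≤ r) :
    ‖Str r q‖ ≤ (∑' n : ℕ, ‖q‖ ^ ((n + 1) ^ 2)) / (1 - ‖q‖) ^ r := by
  have h0 : 0 < 1 - ‖q‖ := sub_pos.mpr hq
  have hsum : Summable fun n : ℕ => ‖q‖ ^ ((n + 1) ^ 2) :=
    (summable_geometric_of_lt_one (norm_nonneg q) hq).of_nonneg_of_le (fun _ => by positivity)
      fun n => pow_le_pow_of_le_one (norm_nonneg q) hq.le (by nlinarith)
  rw [← tsum_div_const]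
  refine tsum_of_norm_bounded (hsum.div_const _).hasSum fun n => ?_
  rw [norm_div, norm_mul, norm_pow, norm_neg, norm_one, one_pow, one_mul, norm_pow]
  exact div_le_div₀ (by positivity)
    (pow_le_pow_of_le_one (norm_nonneg q) hq.le (sq_le_eR r (n + 1))) (pow_pos h0 r)
    (one_sub_norm_pow_le_norm_Str_denom hq.le hr n.succ_ne_zero)

theorem div_one_add_le_one_sub_exp_neg {t : ℝ} (ht : 0 ≤ t) : t / (1 + t) ≤ 1 - exp (-t) := by
  have h : exp (-t) ≤ (1 + t)⁻¹ := by
    rw [exp_neg]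
    exact inv_anti₀ (by linarith) (by linarith [add_one_le_exp t])
  calc t / (1 + t) = 1 - (1 + t)⁻¹ := by field_simp; ring
    _ ≤ 1 - exp (-t) := by linarith

theorem norm_exp_two_pi_I_mkTau (x y : ℝ) :
    ‖Complex.exp (2 * Real.pi * Complex.I * mkTau x y)‖ = Real.exp (-(2 * Real.pi * y)) := by
  rw [Complex.norm_exp]
  congr 1
  simp [mkTau, Complex.mul_re, Complex.mul_im]

theorem norm_Str_exp_mkTau_le {r : ℕ} (hr : 1 ≤ r) (x : ℝ) {y : ℝ} (hy : 0 < y) :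
    ‖Str r (Complex.exp (2 * π * Complex.I * mkTau x y))‖ ≤
      ((1 + 2 * π * y) / (2 * π * y)) ^ r * (√(π / (2 * π * y)) / 2) := by
  set t := 2 * π * y
  have ht : 0 < t := by positivity
  have hv : exp (-t) < 1 := exp_lt_one_iff.mpr (neg_lt_zero.mpr ht)
  have hgauss : ∑' n : ℕ, exp (-t) ^ ((n + 1) ^ 2) ≤ √(π / t) / 2 := by
    simpa only [← exp_nat_mul, Nat.cast_pow, Nat.cast_succ, neg_mul, mul_neg, mul_comm]
      using tsum_exp_neg_mul_succ_sq_le ht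
  have hinv : (1 - exp (-t))⁻¹ ≤ (1 + t) / t := by
    rw [← inv_div]
    exact inv_anti₀ (by positivity) (div_one_add_le_one_sub_exp_neg ht.le)
  calc _ ≤ (∑' n : ℕ, exp (-t) ^ ((n + 1) ^ 2)) / (1 - exp (-t)) ^ r := by
        simpa only [norm_exp_two_pi_I_mkTau] using
          norm_Str_le (q := Complex.exp (2 * π * Complex.I * mkTau x y))
            (by rwa [norm_exp_two_pi_I_mkTau]) hr
    _ = (1 - exp (-t))⁻¹ ^ r * ∑' n : ℕ, exp (-t) ^ ((n + 1) ^ 2) := by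
        rw [inv_pow, div_eq_inv_mul]
    _ ≤ ((1 + t) / t) ^ r * (√(π / t) / 2) := by
        gcongr

/-- Bound for `S̃_r` away from the dominant pole. -/
theorem Str_away_from_pole (r : ℕ) (hr : 1 ≤ r) :
    ∃ C : ℝ, 0 < C ∧ ∃ N₀ : ℕ, ∀ N : ℕ, N₀ ≤ N →
      ∀ x : ℝ, 1 / (4 * Real.sqrt N) ≤ |x| → |x| ≤ 1 / 2 →
        ‖Str r (Complex.exp (2 * Real.pi * Complex.I * mkTau x (1 / (4 * Real.sqrt N))))‖ ≤
          C * (N : ℝ) ^ ((r : ℝ) / 2 + 1 / 4) := by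
  refine ⟨2 ^ r, by positivity, 1, fun N hN x _ _ => ?_⟩
  set s := √(N : ℝ)
  have hs : 1 ≤ s := Real.one_le_sqrt.mpr (by exact_mod_cast hN)
  have hfactor : (1 + 2 * π * (1 / (4 * s))) / (2 * π * (1 / (4 * s))) ≤ 2 * s := by
    rw [div_le_iff₀ (by positivity)]
    field_simp
    nlinarith [pi_gt_three]
  have hgauss : √(π / (2 * π * (1 / (4 * s)))) / 2 ≤ √s := by
    have hsqrt2 : √2 ≤ 2 := (sqrt_le_left zero_le_two).mpr (by norm_num)
    rw [show π / (2 * π * (1 / (4 * s))) = 2 * s by field_simp; ring, sqrt_mul zero_le_two]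
    linarith [mul_le_mul_of_nonneg_right hsqrt2 (sqrt_nonneg s)]
  have hpow : s ^ r * √s = (N : ℝ) ^ ((r : ℝ) / 2 + 1 / 4) := by
    rw [sqrt_eq_rpow, show s = (N : ℝ) ^ (1 / 2 : ℝ) from sqrt_eq_rpow _, ← rpow_natCast,
      ← rpow_mul N.cast_nonneg, ← rpow_mul N.cast_nonneg, ← rpow_add' N.cast_nonneg (by positivity)]
    ring_nf
  calc _ ≤ ((1 + 2 * π * (1 / (4 * s))) / (2 * π * (1 / (4 * s)))) ^ r *
          (√(π / (2 * π * (1 / (4 * s)))) / 2) := norm_Str_exp_mkTau_le hr x (by positivity)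
    _ ≤ (2 * s) ^ r * √s := by gcongr
    _ = 2 ^ r * (N : ℝ) ^ ((r : ℝ) / 2 + 1 / 4) := by rw [mul_pow, mul_assoc, hpow]
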